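/- Let M = ⟨U, V, F, P(U)⟩ be an SCM with induced ADMG G, and let C = {C_1, ..., C_K} be a partition of V whose quotient G_C is acyclic. Then there exists an SCM M_C over the macro-variables C̃_i = (tuple of variables in C_i), with the same exogenous variables U and distribution P(U), such that: (i) the causal diagram induced by M_C equals G_C; (ii) for every u, the solution of each macro-variable in M_C equals the tuple of solutions of its member variables in M; and (iii) for any sets of clusters Y, X, ..., Z, W and any interventions, the counterfactual distributions agree: P_M(y_x, ..., z_w) = P_{M_C}(y_x, ..., z_w). -/
import Mathlib


/-- An acyclic directed mixed graph skeleton: a directed edge relation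
together with a symmetric bidirected edge relation. -/
structure MixedGraph (V : Type) where
  dir : V → V → Prop
  bi : V → V → Prop
  bi_symm : ∀ a b, bi a b → bi b a

namespace MixedGraph

variable {V : Type} {I : Type}

/-- Adjacency: a directed edge in either orientation or a bidirected edge. -/
def Adj (G : MixedGraph V) (a b : V) : Prop :=
  G.dir a b ∨ G.dir b a ∨ G.bi a b

/-- Acyclicity of the directed part. -/
def Acyclic (G : MixedGraph V) : Prop :=
  ∀ a, ¬ Relation.TransGen G.dir a a

/-- The quotient (cluster) graph of `G` by the partition given by the fibers of `π`. -/
def quot (G : MixedGraph V) (π : V → I) : MixedGraph I where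
  dir i j := i ≠ j ∧ ∃ a b, π a = i ∧ π b = j ∧ G.dir a b
  bi i j := i ≠ j ∧ ∃ a b, π a = i ∧ π b = j ∧ G.bi a b
  bi_symm := by
    rintro i j ⟨hne, a, b, ha, hb, h⟩
    exact ⟨hne.symm, b, a, hb, ha, G.bi_symm a b h⟩

/-- The mutilated graph: delete all edges with an arrowhead into `X`
and all directed edges out of `Z`. -/
def mutil (G : MixedGraph V) (X Z : Set V) : MixedGraph V where
  dir a b := G.dir a b ∧ b ∉ X ∧ a ∉ Z
  bi a b := G.bi a b ∧ a ∉ X ∧ b ∉ X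
  bi_symm := by
    rintro a b ⟨h, ha, hb⟩
    exact ⟨G.bi_symm a b h, hb, ha⟩

/-- Type of an edge as traversed along a walk. -/
inductive EType : Type
  | fwd   -- a → b
  | bwd   -- a ← b
  | bidir -- a ↔ b
deriving DecidableEq

/-- The step relation of a walk. -/
def step (G : MixedGraph V) (a : V) (e : EType) (b : V) : Prop :=
  match e with
  | .fwd => G.dir a b
  | .bwd => G.dir b a
  | .bidir => G.bi a b

/-- A walk starting at a vertex, given by a list of (edge type, next vertex). -/
def IsWalk (G : MixedGraph V) : V → List (EType × V) → Prop
  | _, [] => True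
  | a, (e, b) :: rest => G.step a e b ∧ IsWalk G b rest

/-- The final vertex of a walk. -/
def walkEnd : V → List (EType × V) → V
  | a, [] => a
  | _, (_, b) :: rest => walkEnd b rest

/-- `b` is a descendant of `a` (along directed edges, reflexively). -/
def Desc (G : MixedGraph V) : V → V → Prop :=
  Relation.ReflTransGen G.dir

/-- Whether an interior vertex between two consecutive steps is a collider:
an arrowhead on both sides. -/
def colliderAt (e₁ e₂ : EType) : Prop :=
  (e₁ = EType.fwd ∨ e₁ = EType.bidir) ∧ (e₂ = EType.bwd ∨ e₂ = EType.bidir)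

/-- A walk is active (d-connecting) given a conditioning set `S`:
every interior non-collider lies outside `S` and every interior collider
is in `S` or has a descendant in `S`. -/
def Active (G : MixedGraph V) (S : Set V) : List (EType × V) → Prop
  | [] => True
  | [_] => True
  | (e₁, b) :: (e₂, c) :: rest =>
      ((colliderAt e₁ e₂ ∧ ∃ d ∈ S, G.Desc b d) ∨ (¬ colliderAt e₁ e₂ ∧ b ∉ S))
      ∧ Active G S ((e₂, c) :: rest)

/-- The walk contains an (interior) collider belonging to `T`. -/
def HasColliderIn (G : MixedGraph V) (T : Set V) : List (EType × V) → Prop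
  | (e₁, b) :: (e₂, c) :: rest =>
      (colliderAt e₁ e₂ ∧ b ∈ T) ∨ HasColliderIn G T ((e₂, c) :: rest)
  | _ => False

/-- `X` and `Y` are d-connected given `S`: some active walk joins them. -/
def DConn (G : MixedGraph V) (S X Y : Set V) : Prop :=
  ∃ x ∈ X, ∃ w : List (EType × V),
    w ≠ [] ∧ G.IsWalk x w ∧ walkEnd x w ∈ Y ∧ G.Active S w

/-- d-separation: no active walk between `X` and `Y` given `S`. -/
def DSep (G : MixedGraph V) (S X Y : Set V) : Prop :=
  ¬ G.DConn S X Y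

end MixedGraph

open scoped Classical

/-- `s` is a solution map of the SCM with mechanisms `f` under the
intervention `do(X = xv|_X)`: for every exogenous configuration `uu`,
`s uu` is a simultaneous solution of the (intervened) structural equations. -/
def IsSol {V U : Type} {val : V → Type} {uval : U → Type}
    (f : ∀ i : V, (∀ j, val j) → (∀ u, uval u) → val i)
    (X : Set V) (xv : ∀ i, val i)
    (s : (∀ u, uval u) → ∀ i, val i) : Prop :=
  ∀ (uu : ∀ u, uval u) (i : V),
    s uu i = if i ∈ X then xv i else f i (s uu) uu

/-- `s` is a solution map of the macro-level SCM with cluster mechanisms `gf`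
under the cluster intervention `do(X_C = xv)`: each macro-variable (tuple of
the member variables of a cluster) is assigned by one vector-valued
function. -/
def IsMacroSol {V U I : Type} {val : V → Type} {uval : U → Type}
    (gf : ∀ _ : I, (∀ j, val j) → (∀ u, uval u) → ∀ i : V, val i)
    (π : V → I) (Xc : Set I) (xv : ∀ i, val i)
    (s : (∀ u, uval u) → ∀ i, val i) : Prop :=
  ∀ (uu : ∀ u, uval u) (i : V),
    s uu i = if π i ∈ Xc then xv i else gf (π i) (s uu) uu i

open MixedGraph in
/-- macro-level SCM, counterfactual equivalence: given an SCM
over `V` with induced ADMG `G` (parents given by `G.dir`, latent parents by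
`L`, realizing the bidirected edges) whose quotient by `π` is acyclic, there
is a macro-level SCM over the clusters — cluster mechanisms `gf` and latent
sets `U'` — such that (i) its induced diagram is the C-DAG `G.quot π`
(each cluster mechanism depends only on the member variables of the parent
clusters and on `U' c`, and the `U'`-intersections realize exactly the
bidirected edges of the C-DAG); (ii) for every cluster-level intervention
the macro model has a unique solution which coincides pointwise (for every
`u`) with the solution of the original SCM; and (iii) all counterfactual
distributions over the macro-variables agree. -/
theorem stmt18 {V U I : Type}
    [Fintype U] [DecidableEq U] {val : V → Type} {uval : U → Type}
    [∀ u, Fintype (uval u)]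
    (G : MixedGraph V) (hG : G.Acyclic)
    (π : V → I) (hsurj : Function.Surjective π) (hq : (G.quot π).Acyclic)
    (L : U → V → Prop)
    (hbi : ∀ a b, G.bi a b ↔ a ≠ b ∧ ∃ u, L u a ∧ L u b)
    (f : ∀ i : V, (∀ j, val j) → (∀ u, uval u) → val i)
    -- each mechanism depends only on the endogenous parents and latent
    -- parents of its variable
    (hdep : ∀ (i : V) (v v' : ∀ j, val j) (uu uu' : ∀ u, uval u),
      (∀ j, G.dir j i → v j = v' j) → (∀ w, L w i → uu w = uu' w) →
      f i v uu = f i v' uu')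
    -- the SCM has unique solutions under every intervention
    (hM : ∀ (X : Set V) (xv : ∀ i, val i), ∃! s, IsSol f X xv s)
    (Pu : (∀ u, uval u) → ℝ) :
    ∃ (gf : ∀ _ : I, (∀ j, val j) → (∀ u, uval u) → ∀ i : V, val i)
      (U' : I → Set U),
      -- (i) the induced diagram of the macro model is the C-DAG
      (∀ (c : I) (v v' : ∀ j, val j) (uu uu' : ∀ u, uval u),
        (∀ j : V, (G.quot π).dir (π j) c → v j = v' j) →
        (∀ w ∈ U' c, uu w = uu' w) →
        ∀ i : V, π i = c → gf c v uu i = gf c v' uu' i) ∧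
      (∀ i j : I, i ≠ j →
        ((U' i ∩ U' j).Nonempty ↔ (G.quot π).bi i j)) ∧
      -- (ii) unique macro solutions, equal to the solutions of the SCM
      (∀ (Xc : Set I) (xv : ∀ i, val i),
        (∃! s, IsMacroSol gf π Xc xv s) ∧
        (∀ s s', IsSol f {i | π i ∈ Xc} xv s →
          IsMacroSol gf π Xc xv s' → s = s')) ∧
      -- (iii) all counterfactual distributions over the macro-variables agree
      (∀ (k : ℕ) (Xs : Fin k → Set I) (xv : Fin k → ∀ i, val i)
          (sM sC : Fin k → (∀ u, uval u) → ∀ i, val i),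
        (∀ m, IsSol f {i | π i ∈ Xs m} (xv m) (sM m)) →
        (∀ m, IsMacroSol gf π (Xs m) (xv m) (sC m)) →
        ∀ E : (Fin k → ∀ i, val i) → Prop,
          (∑ uu : ∀ u, uval u, if E (fun m => sM m uu) then Pu uu else 0) =
          (∑ uu : ∀ u, uval u, if E (fun m => sC m uu) then Pu uu else 0)) := by
  classical
  -- a chosen solution map for every intervention
  obtain ⟨sol, hsol⟩ : ∃ sol : ∀ (_ : Set V) (_ : ∀ i, val i), (∀ u, uval u) → ∀ i, val i,
      ∀ X xv, IsSol f X xv (sol X xv) :=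
    ⟨fun X xv => (hM X xv).exists.choose, fun X xv => (hM X xv).exists.choose_spec⟩
  -- pointwise uniqueness of solutions (for each fixed exogenous configuration)
  have puniq : ∀ (X : Set V) (xv : ∀ i : V, val i) (uu : ∀ u, uval u) (w w' : ∀ i, val i),
      (∀ i, w i = if i ∈ X then xv i else f i w uu) →
      (∀ i, w' i = if i ∈ X then xv i else f i w' uu) → w = w' := by
    intro X xv uu w w' hw hw'
    obtain ⟨s, hs, huni⟩ := hM X xv
    have key : ∀ w : ∀ i, val i,
        (∀ i, w i = if i ∈ X then xv i else f i w uu) → w = s uu := by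
      intro w hw
      have h1 : IsSol f X xv (fun uu' => if uu' = uu then w else s uu') := by
        intro uu' i
        by_cases h : uu' = uu
        · subst h; simp only [if_pos rfl]; exact hw i
        · simp only [if_neg h]; exact hs uu' i
      have h2 := congrFun (huni _ h1) uu
      simpa using h2
    rw [key w hw, key w' hw']
  -- the macro mechanisms and the macro exogenous sets
  set Out : I → Set V := fun c => {j | π j ≠ c} with hOutd
  have hmem : ∀ (c : I) (i : V), i ∈ Out c ↔ π i ≠ c := fun c i => Iff.rfl
  set gf : ∀ _ : I, (∀ j, val j) → (∀ u, uval u) → ∀ i : V, val i :=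
    fun c v uu => sol (Out c) v uu with hgf
  set U' : I → Set U := fun c => {u | ∃ a, π a = c ∧ L u a} with hU'
  have gf_sys : ∀ (c : I) (v : ∀ j, val j) (uu : ∀ u, uval u) (i : V),
      gf c v uu i = @ite _ (i ∈ Out c) (Classical.propDecidable _) (v i) (f i (gf c v uu) uu) :=
    fun c v uu i => hsol (Out c) v uu i
  have gf_out : ∀ (c : I) (v : ∀ j, val j) (uu : ∀ u, uval u) (i : V), π i ≠ c →
      gf c v uu i = v i := by
    intro c v uu i hi
    simpa [hmem, hi] using gf_sys c v uu i
  have gf_in : ∀ (c : I) (v : ∀ j, val j) (uu : ∀ u, uval u) (i : V), π i = c →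
      gf c v uu i = f i (gf c v uu) uu := by
    intro c v uu i hi
    simpa [hmem, hi] using gf_sys c v uu i
  -- (i) dependence only on parent clusters and on the latent parents of the cluster
  have hdepC : ∀ (c : I) (v v' : ∀ j, val j) (uu uu' : ∀ u, uval u),
      (∀ j : V, (G.quot π).dir (π j) c → v j = v' j) →
      (∀ w ∈ U' c, uu w = uu' w) →
      ∀ i : V, π i = c → gf c v uu i = gf c v' uu' i := by
    intro c v v' uu uu' hv huu i hic
    have hyb : ∀ j, (fun j => if π j = c then gf c v' uu' j else v j) j =
        @ite _ (j ∈ Out c) (Classical.propDecidable _) (v j)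
          (f j (fun j => if π j = c then gf c v' uu' j else v j) uu) := by
      intro j
      by_cases hj : π j = c
      · simp only [hj, if_pos rfl, hmem, ne_eq, not_true_eq_false, if_false]
        have h1 : gf c v' uu' j = f j (gf c v' uu') uu' := gf_in c v' uu' j hj
        rw [h1]
        refine hdep j _ _ _ _ ?_ ?_
        · intro k hk
          by_cases hkc : π k = c
          · simp [hkc]
          · simp only [hkc, if_neg]
            rw [gf_out c v' uu' k hkc]
            exact (hv k ⟨hkc, k, j, rfl, hj, hk⟩).symm
        · intro w hLw
          exact (huu w ⟨j, hj, hLw⟩).symm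
      · simp [hmem, hj]
    have key := puniq (Out c) v uu (gf c v uu)
      (fun j => if π j = c then gf c v' uu' j else v j)
      (fun i => gf_sys c v uu i) hyb
    have := congrFun key i
    simpa [hic] using this
  -- macro solutions: the original solution is a macro solution
  have hmac : ∀ (Xc : Set I) (xv : ∀ i, val i),
      IsMacroSol gf π Xc xv (sol {i | π i ∈ Xc} xv) := by
    intro Xc xv uu i
    by_cases h : π i ∈ Xc
    · simpa [h] using hsol {i | π i ∈ Xc} xv uu i
    · simp only [h, if_false]
      have hsys : ∀ j, (sol {i | π i ∈ Xc} xv uu) j =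
          @ite _ (j ∈ Out (π i)) (Classical.propDecidable _) ((sol {i | π i ∈ Xc} xv uu) j)
            (f j (sol {i | π i ∈ Xc} xv uu) uu) := by
        intro j
        by_cases hj : π j = π i
        · simpa [hmem, hj, h] using hsol {i | π i ∈ Xc} xv uu j
        · simp [hmem, hj]
      have key := puniq (Out (π i)) (sol {i | π i ∈ Xc} xv uu) uu
        (gf (π i) (sol {i | π i ∈ Xc} xv uu) uu) (sol {i | π i ∈ Xc} xv uu)
        (fun j => gf_sys (π i) (sol {i | π i ∈ Xc} xv uu) uu j) hsys
      exact (congrFun key i).symm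
  -- every macro solution equals the chosen original solution
  have hmuniq : ∀ (Xc : Set I) (xv : ∀ i, val i) (s' : (∀ u, uval u) → ∀ i, val i),
      IsMacroSol gf π Xc xv s' → s' = sol {i | π i ∈ Xc} xv := by
    intro Xc xv s' hs'
    funext uu
    refine puniq {i | π i ∈ Xc} xv uu (s' uu) (sol {i | π i ∈ Xc} xv uu) ?_
      (fun i => hsol {i | π i ∈ Xc} xv uu i)
    intro i
    by_cases h : π i ∈ Xc
    · simpa [h] using hs' uu i
    · simp only [Set.mem_setOf_eq, h, if_false]
      -- first show s' uu coincides with the cluster solution for cluster π i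
      have hts : s' uu = gf (π i) (s' uu) uu := by
        funext j
        by_cases hj : π j = π i
        · have hjX : π j ∉ Xc := by rw [hj]; exact h
          have := hs' uu j
          rw [if_neg hjX] at this
          rw [this, hj]
        · exact (gf_out (π i) (s' uu) uu j hj).symm
      calc s' uu i = gf (π i) (s' uu) uu i := congrFun hts i
        _ = f i (gf (π i) (s' uu) uu) uu := gf_in (π i) (s' uu) uu i rfl
        _ = f i (s' uu) uu := by rw [← hts]
  -- original solutions equal macro solutions
  have hBoth : ∀ (Xc : Set I) (xv : ∀ i, val i) (s s' : (∀ u, uval u) → ∀ i, val i),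
      IsSol f {i | π i ∈ Xc} xv s → IsMacroSol gf π Xc xv s' → s = s' := by
    intro Xc xv s s' hs hs'
    obtain ⟨t, ht, htu⟩ := hM {i | π i ∈ Xc} xv
    rw [htu s hs, hmuniq Xc xv s' hs', htu _ (hsol {i | π i ∈ Xc} xv)]
  refine ⟨gf, U', hdepC, ?_, ?_, ?_⟩
  · -- the bidirected edges of the C-DAG
    intro i j hij
    constructor
    · rintro ⟨u, ⟨a, ha, hLa⟩, ⟨b, hb, hLb⟩⟩
      have hab : a ≠ b := fun h => hij (by rw [← ha, ← hb, h])
      exact ⟨hij, a, b, ha, hb, (hbi a b).mpr ⟨hab, u, hLa, hLb⟩⟩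
    · rintro ⟨hne, a, b, ha, hb, hG⟩
      obtain ⟨hab, u, hLa, hLb⟩ := (hbi a b).mp hG
      exact ⟨u, ⟨a, ha, hLa⟩, ⟨b, hb, hLb⟩⟩
  · -- (ii)
    intro Xc xv
    refine ⟨⟨sol {i | π i ∈ Xc} xv, hmac Xc xv, hmuniq Xc xv⟩, ?_⟩
    intro s s' hs hs'
    exact hBoth Xc xv s s' hs hs'
  · -- (iii)
    intro k Xs xv sM sC hsM hsC E
    have hEq : sM = sC := funext fun m => hBoth (Xs m) (xv m) (sM m) (sC m) (hsM m) (hsC m)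
    rw [hEq]
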